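/- arXiv:2203.15994 — 2 statements merged into one kernel-verified Lean document; each statement's English description precedes it below -/
import Mathlib

section
/- Let Σ ⊆ X and let δ, μ > 0 satisfy δ ≤ μ². Assume that for every f ∈ K there is g ∈ Σ ∩ K with ‖f − g‖_X ≤ δ. Let f ∈ K and w := λ(f). Suppose f̂ = ι(ĥ) with ĥ ∈ Y and ι(ĥ) ∈ Σ minimizes the loss, i.e. ‖λ(ι(ĥ)) − w‖ + μ‖ĥ‖_Y ≤ ‖λ(ι(h)) − w‖ + μ‖h‖_Y for every h ∈ Y with ι(h) ∈ Σ. Then, with ε := μ·max(C₀, 1+μ), one has ‖f − f̂‖_X ≤ ε + 2 R(K(w, 2ε))_X. -/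
/-- Chebyshev radius of a set `S` in a normed space `X`:
`R(S) = inf_{z ∈ X} sup_{f ∈ S} ‖f - z‖`. -/
noncomputable def chebRad {X : Type*} [NormedAddCommGroup X] (S : Set X) : ℝ :=
  ⨅ z : X, ⨆ f : S, ‖(f : X) - z‖

/-- Weighted euclidean norm on `ℝ^m`: `‖v‖ = ( m⁻¹ ∑ v_j² )^{1/2}`. -/
noncomputable def wNorm {m : ℕ} (v : Fin m → ℝ) : ℝ :=
  Real.sqrt ((∑ j, v j ^ 2) / m)

/-!
Comparing `f̂` with a `δ`-approximant of `f` in `Σ ∩ K` bounds the penalized loss of `f̂` by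
`δ + μ ≤ μ(1 + μ)`. Hence `λ(ι f̂)` is `μ(1 + μ)`-close to `w` and `‖f̂‖_Y ≤ 1 + μ`, so radially
retracting `f̂` onto the unit ball of `Y` moves `ι f̂` by at most `C₀ μ ≤ ε`, to a point
`f' ∈ K(w, 2ε)`. Since `f` also lies in `K(w, 2ε)`, `‖f - f'‖` is at most twice the Chebyshev
radius of that set.
-/

open Bornology

section WNorm

variable {m : ℕ}

lemma wNorm_nonneg (v : Fin m → ℝ) : 0 ≤ wNorm v := Real.sqrt_nonneg _

lemma wNorm_eq_norm_toLp_div (v : Fin m → ℝ) : wNorm v = ‖WithLp.toLp 2 v‖ / √m := by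
  rw [EuclideanSpace.norm_eq, wNorm, Real.sqrt_div (by positivity)]
  simp [sq_abs]

lemma wNorm_add_le (v w : Fin m → ℝ) : wNorm (v + w) ≤ wNorm v + wNorm w := by
  simp only [wNorm_eq_norm_toLp_div, ← add_div, WithLp.toLp_add]
  gcongr
  exact norm_add_le _ _

lemma wNorm_sub_le_add (a b c : Fin m → ℝ) :
    wNorm (fun j => a j - c j) ≤ wNorm (fun j => a j - b j) + wNorm (fun j => b j - c j) := by
  have h := wNorm_add_le (a - b) (b - c)
  rw [sub_add_sub_cancel] at h
  exact h

lemma wNorm_le_of_forall_abs_le {v : Fin m → ℝ} {C : ℝ} (hC : 0 ≤ C) (h : ∀ j, |v j| ≤ C) :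
    wNorm v ≤ C := by
  have hsum : ∑ j, v j ^ 2 ≤ C ^ 2 * m := by
    calc ∑ j, v j ^ 2 ≤ ∑ _j : Fin m, C ^ 2 :=
          Finset.sum_le_sum fun j _ => by simpa using pow_le_pow_left₀ (abs_nonneg _) (h j) 2
      _ = C ^ 2 * m := by simp [mul_comm]
  calc wNorm v ≤ √(C ^ 2) :=
        Real.sqrt_le_sqrt (div_le_of_le_mul₀ (by positivity) (by positivity) hsum)
    _ = C := Real.sqrt_sq hC

lemma wNorm_apply_sub_apply_le {X : Type*} [SeminormedAddCommGroup X] [NormedSpace ℝ X]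
    {lam : Fin m → X →L[ℝ] ℝ} (hlam : ∀ j, ‖lam j‖ ≤ 1) (u v : X) :
    wNorm (fun j => lam j u - lam j v) ≤ ‖u - v‖ :=
  wNorm_le_of_forall_abs_le (norm_nonneg _) fun j => by
    rw [← map_sub, ← Real.norm_eq_abs]
    simpa using (lam j).le_of_opNorm_le (hlam j) (u - v)

end WNorm

lemma norm_sub_le_two_mul_chebRad {X : Type*} [NormedAddCommGroup X] {S : Set X}
    (hS : IsBounded S) {u v : X} (hu : u ∈ S) (hv : v ∈ S) : ‖u - v‖ ≤ 2 * chebRad S := by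
  rw [← div_le_iff₀' two_pos]
  refine le_ciInf fun z => ?_
  obtain ⟨r, hr⟩ := (Metric.isBounded_iff_subset_closedBall z).1 hS
  have hbdd : BddAbove (Set.range fun f : S => ‖(f : X) - z‖) :=
    ⟨r, by rintro _ ⟨f, rfl⟩; exact mem_closedBall_iff_norm.1 (hr f.2)⟩
  have hu' := le_ciSup hbdd ⟨u, hu⟩
  have hv' := le_ciSup hbdd ⟨v, hv⟩
  have := norm_sub_le_norm_sub_add_norm_sub u z v
  rw [norm_sub_rev z v] at this
  linarith

lemma exists_norm_le_one_norm_sub_le {E : Type*} [SeminormedAddCommGroup E] [NormedSpace ℝ E]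
    {y : E} {r : ℝ} (hr : 0 ≤ r) (hy : ‖y‖ ≤ 1 + r) : ∃ z : E, ‖z‖ ≤ 1 ∧ ‖y - z‖ ≤ r := by
  rcases le_or_gt ‖y‖ 1 with hy1 | hy1
  · exact ⟨y, hy1, by simpa using hr⟩
  have hy0 : ‖y‖ ≠ 0 := by positivity
  refine ⟨‖y‖⁻¹ • y, by rw [norm_smul, norm_inv, norm_norm, inv_mul_cancel₀ hy0], ?_⟩
  have hcoef : 0 ≤ 1 - ‖y‖⁻¹ := sub_nonneg.2 (inv_le_one_of_one_le₀ hy1.le)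
  calc ‖y - ‖y‖⁻¹ • y‖ = ‖(1 - ‖y‖⁻¹) • y‖ := by rw [sub_smul, one_smul]
    _ = (1 - ‖y‖⁻¹) * ‖y‖ := by rw [norm_smul, Real.norm_of_nonneg hcoef]
    _ = ‖y‖ - 1 := by rw [sub_mul, one_mul, inv_mul_cancel₀ hy0]
    _ ≤ r := by linarith

lemma exists_norm_le_one_norm_map_sub_le {X Y : Type*} [SeminormedAddCommGroup X]
    [NormedSpace ℝ X] [SeminormedAddCommGroup Y] [NormedSpace ℝ Y] (ι : Y →ₗ[ℝ] X) {C₀ c : ℝ}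
    (hC₀ : ∀ g : Y, ‖ι g‖ ≤ C₀ * ‖g‖) (hc : C₀ ≤ c) (hc₀ : 0 ≤ c) {y : Y} {r : ℝ} (hr : 0 ≤ r)
    (hy : ‖y‖ ≤ 1 + r) : ∃ z : Y, ‖z‖ ≤ 1 ∧ ‖ι z - ι y‖ ≤ r * c := by
  obtain ⟨z, hz, hyz⟩ := exists_norm_le_one_norm_sub_le hr hy
  refine ⟨z, hz, ?_⟩
  calc ‖ι z - ι y‖ = ‖ι (y - z)‖ := by rw [map_sub, norm_sub_rev]
    _ ≤ C₀ * ‖y - z‖ := hC₀ _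
    _ ≤ c * r := by gcongr
    _ = r * c := mul_comm _ _

theorem stmt_3_general
    {X Y : Type*} [NormedAddCommGroup X] [NormedSpace ℝ X]
    [NormedAddCommGroup Y] [NormedSpace ℝ Y]
    {m : ℕ}
    (lam : Fin m → X →L[ℝ] ℝ) (hlam : ∀ j, ‖lam j‖ ≤ 1)
    (ι : Y →ₗ[ℝ] X)
    (C₀ : ℝ) (hC₀ : ∀ g : Y, ‖ι g‖ ≤ C₀ * ‖g‖)
    (Sig : Set X) (δ μ : ℝ) (hμ : 0 < μ) (hδμ : δ ≤ μ ^ 2)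
    (happrox : ∀ f ∈ ι '' {g : Y | ‖g‖ ≤ 1},
      ∃ g ∈ Sig ∩ ι '' {g : Y | ‖g‖ ≤ 1}, ‖f - g‖ ≤ δ)
    (f : X) (hf : f ∈ ι '' {g : Y | ‖g‖ ≤ 1})
    (fhat : Y)
    (hmin : ∀ h : Y, ι h ∈ Sig →
      wNorm (fun j => lam j (ι fhat) - lam j f) + μ * ‖fhat‖ ≤
        wNorm (fun j => lam j (ι h) - lam j f) + μ * ‖h‖) :
    ‖f - ι fhat‖ ≤ μ * max C₀ (1 + μ) +
      2 * chebRad {u ∈ ι '' {g : Y | ‖g‖ ≤ 1} |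
        wNorm (fun j => lam j u - lam j f) ≤ 2 * (μ * max C₀ (1 + μ))} := by
  set ε := μ * max C₀ (1 + μ)
  set S := {u ∈ ι '' {g : Y | ‖g‖ ≤ 1} | wNorm (fun j => lam j u - lam j f) ≤ 2 * ε}
  have hε₀ : 0 ≤ ε := by positivity
  have hε : μ * (1 + μ) ≤ ε := mul_le_mul_of_nonneg_left (le_max_right _ _) hμ.le
  obtain ⟨_, ⟨hgSig, g, hg, rfl⟩, hfg⟩ := happrox f hf
  have hloss : wNorm (fun j => lam j (ι fhat) - lam j f) + μ * ‖fhat‖ ≤ μ * (1 + μ) :=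
    calc _ ≤ wNorm (fun j => lam j (ι g) - lam j f) + μ * ‖g‖ := hmin g hgSig
      _ ≤ δ + μ * 1 := by
          gcongr
          · exact (wNorm_apply_sub_apply_le hlam _ _).trans (norm_sub_rev (ι g) f ▸ hfg)
          · exact hg
      _ ≤ μ * (1 + μ) := by linarith
  have hfit : wNorm (fun j => lam j (ι fhat) - lam j f) ≤ μ * (1 + μ) := by
    linarith [mul_nonneg hμ.le (norm_nonneg fhat)]
  have hnorm : ‖fhat‖ ≤ 1 + μ :=
    le_of_mul_le_mul_left (by linarith [wNorm_nonneg fun j => lam j (ι fhat) - lam j f]) hμ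
  obtain ⟨z, hz, hclose⟩ := exists_norm_le_one_norm_map_sub_le ι hC₀ (le_max_left _ (1 + μ))
    (by positivity) hμ.le hnorm
  have hzS : ι z ∈ S := by
    refine ⟨⟨z, hz, rfl⟩, ?_⟩
    linarith [wNorm_apply_sub_apply_le hlam (ι z) (ι fhat),
      wNorm_sub_le_add (fun j => lam j (ι z)) (fun j => lam j (ι fhat)) (fun j => lam j f)]
  have hS : IsBounded S :=
    ((ι.mkContinuous C₀ hC₀).lipschitz.isBounded_image
      (isBounded_iff_forall_norm_le.2 ⟨1, fun _ => id⟩)).subset (Set.sep_subset _ _)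
  have hfS : f ∈ S :=
    ⟨hf, (wNorm_apply_sub_apply_le hlam f f).trans (by simpa using hε₀)⟩
  linarith [norm_sub_le_two_mul_chebRad hS hfS hzS,
    norm_sub_le_norm_sub_add_norm_sub f (ι z) (ι fhat)]

/-- Near optimality of the minimizer of the penalized loss
`g ↦ ‖λ(g) − w‖ + μ‖g‖_Y` over `Σ`, for the model class `K = ι(U(Y))`:
with `ε := μ·max(C₀, 1+μ)` one has `‖f − f̂‖_X ≤ ε + 2 R(K(w, 2ε))`. -/
theorem stmt_3
    {X Y : Type*} [NormedAddCommGroup X] [NormedSpace ℝ X] [CompleteSpace X]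
    [NormedAddCommGroup Y] [NormedSpace ℝ Y]
    {m : ℕ} (hm : 0 < m)
    (lam : Fin m → X →L[ℝ] ℝ) (hlam : ∀ j, ‖lam j‖ ≤ 1)
    (ι : Y →ₗ[ℝ] X) (hι : Function.Injective ι)
    (C₀ : ℝ) (hC₀ : ∀ g : Y, ‖ι g‖ ≤ C₀ * ‖g‖)
    (hK : IsCompact (ι '' {g : Y | ‖g‖ ≤ 1}))
    (Sig : Set X) (δ μ : ℝ) (hδ : 0 < δ) (hμ : 0 < μ) (hδμ : δ ≤ μ ^ 2)
    (happrox : ∀ f ∈ ι '' {g : Y | ‖g‖ ≤ 1},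
      ∃ g ∈ Sig ∩ ι '' {g : Y | ‖g‖ ≤ 1}, ‖f - g‖ ≤ δ)
    (f : X) (hf : f ∈ ι '' {g : Y | ‖g‖ ≤ 1})
    (fhat : Y) (hfhat : ι fhat ∈ Sig)
    (hmin : ∀ h : Y, ι h ∈ Sig →
      wNorm (fun j => lam j (ι fhat) - lam j f) + μ * ‖fhat‖ ≤
        wNorm (fun j => lam j (ι h) - lam j f) + μ * ‖h‖) :
    ‖f - ι fhat‖ ≤ μ * max C₀ (1 + μ) +
      2 * chebRad {u ∈ ι '' {g : Y | ‖g‖ ≤ 1} |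
        wNorm (fun j => lam j u - lam j f) ≤ 2 * (μ * max C₀ (1 + μ))} :=
  stmt_3_general lam hlam ι C₀ hC₀ Sig δ μ hμ hδμ happrox f hf fhat hmin
end

section
/- The piecewise-linear interpolant satisfies the L₂ error bound ‖f − S‖_{L₂[0,1]} ≤ ‖f′‖_{L_p[0,1]} · h^s, where s := 1 − (1/p − 1/2)_+ (so s = 3/2 − 1/p for 1 ≤ p ≤ 2 and s = 1 for p ≥ 2). -/
/-!
On a cell `[a, b]` of the partition, `f x - S x` is a convex combination of `f x - f a` and
`f x - f b`, so `|f x - S x| ≤ ∫_a^b |f'|`, and Hölder bounds this by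
`‖f'‖_{L_q[a,b]} (b - a)^(1 - 1/q)`. Integrating the square over the cell gives
`‖f - S‖_{L_2[a,b]} ≤ ‖f'‖_{L_q[a,b]} h^(3/2 - 1/q)`. For `q ≤ 2` these local bounds add up,
because `∑ aⱼ² ≤ (∑ aⱼ^q)^(2/q)`. For `p > 2` take `q = 2` and use `‖f'‖_2 ≤ ‖f'‖_p`, since
`[0, 1]` has measure one.
-/

open MeasureTheory Set ENNReal
open scoped Function

theorem ENNReal.sum_rpow_le_rpow_sum {ι : Type*} (s : Finset ι) (x : ι → ℝ≥0∞) {q : ℝ}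
    (hq : 1 ≤ q) : ∑ i ∈ s, x i ^ q ≤ (∑ i ∈ s, x i) ^ q := by
  classical
  induction s using Finset.induction_on with
  | empty => simp [zero_rpow_of_pos (zero_lt_one.trans_le hq)]
  | insert i s hi ih =>
    rw [Finset.sum_insert hi, Finset.sum_insert hi]
    calc x i ^ q + ∑ j ∈ s, x j ^ q ≤ x i ^ q + (∑ j ∈ s, x j) ^ q := by gcongr
      _ ≤ (x i + ∑ j ∈ s, x j) ^ q := add_rpow_le_rpow_add _ _ hq

theorem Monotone.pairwise_disjoint_on_Ioc_castSucc_succ {α : Type*} [Preorder α] {n : ℕ}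
    {ξ : Fin (n + 1) → α} (hξ : Monotone ξ) :
    Pairwise (Disjoint on fun j : Fin n => Ioc (ξ j.castSucc) (ξ j.succ)) :=
  (pairwise_disjoint_on _).2 fun _ _ hij =>
    Ioc_disjoint_Ioc_of_le (hξ (Fin.succ_le_castSucc_iff.2 hij))

theorem Monotone.iUnion_Ioc_castSucc_succ {α : Type*} [LinearOrder α] :
    ∀ {n : ℕ} {ξ : Fin (n + 1) → α}, Monotone ξ →
      ⋃ j : Fin n, Ioc (ξ j.castSucc) (ξ j.succ) = Ioc (ξ 0) (ξ (Fin.last n))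
  | 0, _, _ => by simp
  | n + 1, ξ, hξ => by
    have ih : ⋃ j : Fin n, Ioc (ξ j.castSucc.castSucc) (ξ j.succ.castSucc) =
        Ioc (ξ 0) (ξ (Fin.last n).castSucc) :=
      (hξ.comp Fin.strictMono_castSucc.monotone).iUnion_Ioc_castSucc_succ
    rw [← Ioc_union_Ioc_eq_Ioc (hξ (Fin.zero_le _)) (hξ (Fin.le_last _)), ← ih]
    ext x
    simp [Fin.exists_fin_succ']

section LpGluing

variable {ι α E F : Type*} [Fintype ι] [MeasurableSpace α] [NormedAddCommGroup E]
  [NormedAddCommGroup F] {μ : Measure α} {I : ι → Set α}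

theorem eLpNorm_restrict_iUnion_rpow (hI : ∀ i, MeasurableSet (I i))
    (hdisj : Pairwise (Disjoint on I)) (f : α → E) {p : ℝ≥0∞} (hp0 : p ≠ 0) (hp : p ≠ ∞) :
    eLpNorm f p (μ.restrict (⋃ i, I i)) ^ p.toReal =
      ∑ i, eLpNorm f p (μ.restrict (I i)) ^ p.toReal := by
  have hr : 0 < p.toReal := toReal_pos hp0 hp
  simp only [eLpNorm_eq_eLpNorm' hp0 hp, ← lintegral_rpow_enorm_eq_rpow_eLpNorm' hr]
  rw [lintegral_iUnion hI hdisj, tsum_fintype]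

theorem eLpNorm_restrict_iUnion_le_of_forall_le (hI : ∀ i, MeasurableSet (I i))
    (hdisj : Pairwise (Disjoint on I)) {p q : ℝ≥0∞} (hq0 : q ≠ 0) (hqp : q ≤ p) (hp : p ≠ ∞)
    {g : α → E} {f : α → F} {C : ℝ≥0∞}
    (hbound : ∀ i, eLpNorm g p (μ.restrict (I i)) ≤ eLpNorm f q (μ.restrict (I i)) * C) :
    eLpNorm g p (μ.restrict (⋃ i, I i)) ≤ eLpNorm f q (μ.restrict (⋃ i, I i)) * C := by
  have hp0 : p ≠ 0 := (pos_iff_ne_zero.2 hq0 |>.trans_le hqp).ne'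
  have hq : q ≠ ∞ := ne_top_of_le_ne_top hp hqp
  have hr : 0 < p.toReal := toReal_pos hp0 hp
  have hs : 0 < q.toReal := toReal_pos hq0 hq
  have hsr : 1 ≤ p.toReal / q.toReal := (one_le_div hs).2 (toReal_mono hp hqp)
  set B := fun i => eLpNorm f q (μ.restrict (I i))
  rw [← rpow_le_rpow_iff hr, eLpNorm_restrict_iUnion_rpow hI hdisj g hp0 hp]
  calc ∑ i, eLpNorm g p (μ.restrict (I i)) ^ p.toReal ≤ ∑ i, (B i * C) ^ p.toReal := by
        gcongr with i; exact hbound i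
    _ = C ^ p.toReal * ∑ i, (B i ^ q.toReal) ^ (p.toReal / q.toReal) := by
        rw [Finset.mul_sum]
        refine Finset.sum_congr rfl fun i _ => ?_
        rw [mul_rpow_of_nonneg _ _ hr.le, ← rpow_mul, mul_div_cancel₀ _ hs.ne', mul_comm]
    _ ≤ C ^ p.toReal * (∑ i, B i ^ q.toReal) ^ (p.toReal / q.toReal) := by
        gcongr; exact sum_rpow_le_rpow_sum _ _ hsr
    _ = (eLpNorm f q (μ.restrict (⋃ i, I i)) * C) ^ p.toReal := by
        rw [← eLpNorm_restrict_iUnion_rpow hI hdisj f hq0 hq, ← rpow_mul,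
          mul_div_cancel₀ _ hs.ne', mul_rpow_of_nonneg _ _ hr.le, mul_comm]

theorem setLIntegral_enorm_le_eLpNorm_mul_rpow {p : ℝ≥0∞} (hp : 1 ≤ p) {f : α → E}
    {s : Set α} (hf : AEStronglyMeasurable f (μ.restrict s)) :
    ∫⁻ x in s, ‖f x‖ₑ ∂μ ≤ eLpNorm f p (μ.restrict s) * μ s ^ (1 - 1 / p.toReal) := by
  simpa [eLpNorm_one_eq_lintegral_enorm] using eLpNorm_le_eLpNorm_mul_rpow_measure_univ hp hf

end LpGluing

theorem abs_sub_interp_le_max {a b x y ya yb : ℝ} (hab : a < b) (hx : x ∈ Icc a b) :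
    |y - (ya + (yb - ya) / (b - a) * (x - a))| ≤ max |y - ya| |y - yb| := by
  set θ := (x - a) / (b - a)
  have hθ0 : 0 ≤ θ := div_nonneg (sub_nonneg.2 hx.1) (sub_pos.2 hab).le
  have hθ1 : θ ≤ 1 := (div_le_one (sub_pos.2 hab)).2 (by linarith [hx.2])
  have hsplit : y - (ya + (yb - ya) / (b - a) * (x - a)) =
      (1 - θ) * (y - ya) + θ * (y - yb) := by
    simp only [θ]; field_simp; ring
  rw [hsplit]
  calc |(1 - θ) * (y - ya) + θ * (y - yb)| ≤ (1 - θ) * |y - ya| + θ * |y - yb| := by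
        refine (abs_add_le _ _).trans_eq ?_
        rw [abs_mul, abs_mul, abs_of_nonneg (sub_nonneg.2 hθ1), abs_of_nonneg hθ0]
    _ ≤ (1 - θ) * max |y - ya| |y - yb| + θ * max |y - ya| |y - yb| := by
        have : 0 ≤ 1 - θ := sub_nonneg.2 hθ1
        gcongr
        exacts [le_max_left _ _, le_max_right _ _]
    _ = max |y - ya| |y - yb| := by ring

section AbsolutelyContinuous

variable {f f' : ℝ → ℝ} {c d : ℝ}

theorem enorm_sub_le_setLIntegral_Ioc (hf' : IntegrableOn f' (Icc c d))
    (hf : ∀ x ∈ Icc c d, f x = f c + ∫ t in c..x, f' t) {a b u v : ℝ}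
    (hsub : Icc a b ⊆ Icc c d) (hu : u ∈ Icc a b) (hv : v ∈ Icc a b) :
    ‖f v - f u‖ₑ ≤ ∫⁻ t in Ioc a b, ‖f' t‖ₑ := by
  have hc : c ∈ Icc c d := left_mem_Icc.2 ((hsub hu).1.trans (hsub hu).2)
  have hint : ∀ x ∈ Icc a b, IntervalIntegrable f' volume c x := fun x hx =>
    (hf'.mono_set (uIcc_subset_Icc hc (hsub hx))).intervalIntegrable
  have hdiff : f v - f u = ∫ t in u..v, f' t := by
    rw [hf v (hsub hv), hf u (hsub hu),
      ← intervalIntegral.integral_interval_sub_left (hint v hv) (hint u hu)]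
    ring
  rw [hdiff, ← ofReal_norm, intervalIntegral.norm_integral_eq_norm_integral_uIoc,
    ofReal_norm]
  exact (enorm_integral_le_lintegral_enorm _).trans
    (lintegral_mono_set (Ioc_subset_Ioc (le_min hu.1 hv.1) (max_le hu.2 hv.2)))

theorem enorm_sub_interp_le_setLIntegral_Ioc (hf' : IntegrableOn f' (Icc c d))
    (hf : ∀ x ∈ Icc c d, f x = f c + ∫ t in c..x, f' t) {a b x : ℝ} (hab : a < b)
    (hsub : Icc a b ⊆ Icc c d) (hx : x ∈ Icc a b) :
    ‖f x - (f a + (f b - f a) / (b - a) * (x - a))‖ₑ ≤ ∫⁻ t in Ioc a b, ‖f' t‖ₑ := by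
  have ha := enorm_sub_le_setLIntegral_Ioc hf' hf hsub (left_mem_Icc.2 hab.le) hx
  have hb := enorm_sub_le_setLIntegral_Ioc hf' hf hsub (right_mem_Icc.2 hab.le) hx
  rw [Real.enorm_eq_ofReal_abs] at ha hb ⊢
  calc ENNReal.ofReal |f x - (f a + (f b - f a) / (b - a) * (x - a))|
      ≤ ENNReal.ofReal (max |f x - f a| |f x - f b|) :=
        ofReal_le_ofReal (abs_sub_interp_le_max hab hx)
    _ ≤ ∫⁻ t in Ioc a b, ‖f' t‖ₑ := by rw [ofReal_max]; exact max_le ha hb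

theorem eLpNorm_sub_interp_restrict_Ioc_le {q : ℝ≥0∞} (hq : 1 ≤ q)
    (hf' : IntegrableOn f' (Icc c d)) (hf : ∀ x ∈ Icc c d, f x = f c + ∫ t in c..x, f' t)
    {a b : ℝ} (hab : a < b) (hsub : Icc a b ⊆ Icc c d) {S : ℝ → ℝ}
    (hS : ∀ x ∈ Icc a b, S x = f a + (f b - f a) / (b - a) * (x - a)) :
    eLpNorm (fun t => f t - S t) 2 (volume.restrict (Ioc a b)) ≤
      eLpNorm f' q (volume.restrict (Ioc a b)) *
        ENNReal.ofReal (b - a) ^ (3 / 2 - 1 / q.toReal) := by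
  have hV0 : ENNReal.ofReal (b - a) ≠ 0 := (ofReal_pos.2 (sub_pos.2 hab)).ne'
  have hbound : ∀ᵐ x ∂volume.restrict (Ioc a b),
      ‖f x - S x‖ₑ ≤ ∫⁻ t in Ioc a b, ‖f' t‖ₑ :=
    (ae_restrict_mem measurableSet_Ioc).mono fun x hx => by
      rw [hS x (Ioc_subset_Icc_self hx)]
      exact enorm_sub_interp_le_setLIntegral_Ioc hf' hf hab hsub (Ioc_subset_Icc_self hx)
  have hHolder := setLIntegral_enorm_le_eLpNorm_mul_rpow hq
    (hf'.mono_set (Ioc_subset_Icc_self.trans hsub)).aestronglyMeasurable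
  rw [Real.volume_Ioc] at hHolder
  calc eLpNorm (fun t => f t - S t) 2 (volume.restrict (Ioc a b))
      ≤ (∫⁻ t in Ioc a b, ‖f' t‖ₑ) * ENNReal.ofReal (b - a) ^ (1 / 2 : ℝ) := by
        simpa using eLpNorm_le_of_ae_enorm_bound (p := 2) hbound
    _ ≤ eLpNorm f' q (volume.restrict (Ioc a b)) * ENNReal.ofReal (b - a) ^ (1 - 1 / q.toReal)
          * ENNReal.ofReal (b - a) ^ (1 / 2 : ℝ) := by gcongr
    _ = _ := by
        rw [mul_assoc, ← rpow_add _ _ hV0 ofReal_ne_top]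
        ring_nf

end AbsolutelyContinuous

/-- At `p = ∞` both sides equal `1`, through the junk values `(∞).toReal = 0` and `1 / 0 = 0`. -/
theorem one_sub_max_one_div_sub_half {p : ℝ≥0∞} (hp : 1 ≤ p) :
    1 - max (1 / p.toReal - 1 / 2) 0 = 3 / 2 - 1 / (min p 2).toReal := by
  have h2 : (2 : ℝ≥0∞).toReal⁻¹ = 1 / 2 := by norm_num
  simp only [one_div, ← toReal_inv] at h2 ⊢
  rcases le_total p 2 with hp2 | hp2
  · have : 2⁻¹ ≤ p⁻¹ := ENNReal.inv_le_inv.2 hp2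
    rw [min_eq_left hp2, max_eq_left]
    · ring
    · rw [sub_nonneg, ← h2]
      exact toReal_mono (inv_ne_top.2 (one_pos.trans_le hp).ne') this
  · have : p⁻¹ ≤ 2⁻¹ := ENNReal.inv_le_inv.2 hp2
    rw [min_eq_right hp2, max_eq_right, h2]
    · norm_num
    · rw [sub_nonpos, ← h2]
      exact toReal_mono (inv_ne_top.2 two_ne_zero) this

theorem one_div_toReal_le_one {q : ℝ≥0∞} (hq : 1 ≤ q) : 1 / q.toReal ≤ 1 := by
  rw [one_div, ← toReal_inv]
  exact toReal_le_of_le_ofReal zero_le_one (by simpa using ENNReal.inv_le_one.2 hq)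

theorem eLpNorm_sub_piecewiseLinear_le {q : ℝ≥0∞} (hq1 : 1 ≤ q) (hq2 : q ≤ 2) {n : ℕ}
    {ξ : Fin (n + 1) → ℝ} (hmono : StrictMono ξ) (hξ0 : ξ 0 = 0) (hξ1 : ξ (Fin.last n) = 1)
    {h : ℝ} (hΔ : ∀ j : Fin n, ξ j.succ - ξ j.castSucc ≤ h) {f f' : ℝ → ℝ}
    (hf' : IntegrableOn f' (Icc 0 1))
    (hf : ∀ x ∈ Icc (0 : ℝ) 1, f x = f 0 + ∫ t in (0 : ℝ)..x, f' t) {S : ℝ → ℝ}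
    (hS : ∀ j : Fin n, ∀ x ∈ Icc (ξ j.castSucc) (ξ j.succ),
      S x = f (ξ j.castSucc) +
        (f (ξ j.succ) - f (ξ j.castSucc)) / (ξ j.succ - ξ j.castSucc) * (x - ξ j.castSucc)) :
    eLpNorm (fun t => f t - S t) 2 (volume.restrict (Icc 0 1)) ≤
      eLpNorm f' q (volume.restrict (Icc 0 1)) * ENNReal.ofReal h ^ (3 / 2 - 1 / q.toReal) := by
  have hU : ⋃ j : Fin n, Ioc (ξ j.castSucc) (ξ j.succ) = Ioc 0 1 := by
    rw [hmono.monotone.iUnion_Ioc_castSucc_succ, hξ0, hξ1]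
  have hsub : ∀ j : Fin n, Icc (ξ j.castSucc) (ξ j.succ) ⊆ Icc 0 1 := fun j =>
    Icc_subset_Icc (hξ0 ▸ hmono.monotone (Fin.zero_le _))
      (hξ1 ▸ hmono.monotone (Fin.le_last _))
  have hexp : 0 ≤ 3 / 2 - 1 / q.toReal := by linarith [one_div_toReal_le_one hq1]
  rw [← Measure.restrict_congr_set Ioc_ae_eq_Icc, ← hU]
  refine eLpNorm_restrict_iUnion_le_of_forall_le (fun _ => measurableSet_Ioc)
    hmono.monotone.pairwise_disjoint_on_Ioc_castSucc_succ (one_pos.trans_le hq1).ne' hq2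
    ofNat_ne_top fun j => ?_
  calc _ ≤ eLpNorm f' q _ * ENNReal.ofReal (ξ j.succ - ξ j.castSucc) ^ (3 / 2 - 1 / q.toReal) :=
        eLpNorm_sub_interp_restrict_Ioc_le hq1 hf' hf (hmono j.castSucc_lt_succ) (hsub j) (hS j)
    _ ≤ _ := by gcongr; exact hΔ j

theorem stmt_14_general
    (p : ℝ≥0∞) (hp : 1 ≤ p)
    {n : ℕ} (ξ : Fin (n + 1) → ℝ)
    (hmono : StrictMono ξ) (hξ0 : ξ 0 = 0) (hξ1 : ξ (Fin.last n) = 1)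
    (h : ℝ)
    (hmax : IsGreatest (Set.range fun j : Fin n => ξ j.succ - ξ j.castSucc) h)
    (f f' : ℝ → ℝ)
    (hf'int : IntegrableOn f' (Icc 0 1))
    (hAC : ∀ x ∈ Icc (0 : ℝ) 1, f x = f 0 + ∫ t in (0 : ℝ)..x, f' t)
    (S : ℝ → ℝ)
    (hSaff : ∀ j : Fin n, ∀ x ∈ Icc (ξ j.castSucc) (ξ j.succ),
      S x = f (ξ j.castSucc) +
        (f (ξ j.succ) - f (ξ j.castSucc)) / (ξ j.succ - ξ j.castSucc) *
          (x - ξ j.castSucc)) :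
    eLpNorm (fun t => f t - S t) 2 (volume.restrict (Icc 0 1)) ≤
      eLpNorm f' p (volume.restrict (Icc 0 1)) *
        ENNReal.ofReal (h ^ (1 - max (1 / p.toReal - 1 / 2) 0)) := by
  have hh : 0 ≤ h := by
    obtain ⟨j, rfl⟩ := hmax.1
    exact sub_nonneg.2 (hmono.monotone (Fin.castSucc_le_succ j))
  have hq1 : 1 ≤ min p 2 := le_min hp one_le_two
  have : IsProbabilityMeasure (volume.restrict (Icc (0 : ℝ) 1)) := ⟨by simp⟩
  rw [one_sub_max_one_div_sub_half hp,
    ← ofReal_rpow_of_nonneg hh (by linarith [one_div_toReal_le_one hq1])]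
  calc eLpNorm (fun t => f t - S t) 2 (volume.restrict (Icc 0 1))
      ≤ eLpNorm f' (min p 2) (volume.restrict (Icc 0 1)) * _ :=
        eLpNorm_sub_piecewiseLinear_le hq1 (min_le_right _ _) hmono hξ0 hξ1
          (fun j => hmax.2 ⟨j, rfl⟩) hf'int hAC hSaff
    _ ≤ _ := by
        gcongr
        exact eLpNorm_le_eLpNorm_of_exponent_le (min_le_left _ _) hf'int.aestronglyMeasurable

/-- `L₂` error bound for the piecewise-linear interpolant: if `f` is absolutely
continuous on `[0,1]` with a.e. derivative `f' ∈ L_p[0,1]`, and `S` interpolates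
`f` at `0 = ξ_0 < ⋯ < ξ_n = 1` and is affine on each `[ξ_j, ξ_{j+1}]`, then
`‖f − S‖_{L₂[0,1]} ≤ ‖f'‖_{L_p[0,1]} · h^s` where `h` is the maximal spacing and
`s := 1 − (1/p − 1/2)₊`. -/
theorem stmt_14
    (p : ℝ≥0∞) (hp : 1 ≤ p)
    {n : ℕ} (hn : 0 < n) (ξ : Fin (n + 1) → ℝ)
    (hmono : StrictMono ξ) (hξ0 : ξ 0 = 0) (hξ1 : ξ (Fin.last n) = 1)
    (h : ℝ)
    (hmax : IsGreatest (Set.range fun j : Fin n => ξ j.succ - ξ j.castSucc) h)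
    (f f' : ℝ → ℝ)
    (hf'int : IntegrableOn f' (Icc 0 1))
    (hAC : ∀ x ∈ Icc (0 : ℝ) 1, f x = f 0 + ∫ t in (0 : ℝ)..x, f' t)
    (hf'Lp : MemLp f' p (volume.restrict (Icc 0 1)))
    (S : ℝ → ℝ)
    (hSaff : ∀ j : Fin n, ∀ x ∈ Icc (ξ j.castSucc) (ξ j.succ),
      S x = f (ξ j.castSucc) +
        (f (ξ j.succ) - f (ξ j.castSucc)) / (ξ j.succ - ξ j.castSucc) *
          (x - ξ j.castSucc)) :
    eLpNorm (fun t => f t - S t) 2 (volume.restrict (Icc 0 1)) ≤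
      eLpNorm f' p (volume.restrict (Icc 0 1)) *
        ENNReal.ofReal (h ^ (1 - max (1 / p.toReal - 1 / 2) 0)) :=
  stmt_14_general p hp ξ hmono hξ0 hξ1 h hmax f f' hf'int hAC S hSaff
end
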